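/- arXiv:1803.07062 — 3 statements merged into one kernel-verified Lean document; each statement's English description precedes it below -/
import Mathlib

section
/- Let (E, 𝒜) be a measurable space and S a stochastic operator on the finite signed measures on E satisfying the Doeblin condition: there exist α ∈ (0,1) and a probability measure ν on E with Sμ ≥ α ν for every probability measure μ on E. Then for any two finite signed measures μ_1, μ_2 on E with μ_1(E) = μ_2(E), one has ‖S μ_1 − S μ_2‖_TV ≤ (1−α) ‖μ_1 − μ_2‖_TV. -/
/-! Write `μ₁ - μ₂ = p - q` with `p, q` its Jordan parts: they have equal mass `c` and
`‖μ₁ - μ₂‖_TV = 2c`. For `c ≠ 0`, `S (μ₁ - μ₂) = c (S P - S Q)` with `P = p / c`, `Q = q / c`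
probability measures, and by the Doeblin condition `S P - αν`, `S Q - αν` are nonnegative of mass
`1 - α`, so the triangle inequality gives `‖S P - S Q‖_TV ≤ 2 (1 - α)`. -/

open MeasureTheory Real Set

/-- Total variation norm of a finite signed measure. -/
noncomputable def tvNorm {E : Type*} [MeasurableSpace E] (μ : SignedMeasure E) : ℝ :=
  (μ.totalVariation Set.univ).toReal

section TotalVariation

variable {E : Type*} [MeasurableSpace E]

lemma tvNorm_smul (c : ℝ) (μ : SignedMeasure E) : tvNorm (c • μ) = |c| * tvNorm μ := by
  simp [tvNorm, SignedMeasure.totalVariation_eq_variation, VectorMeasure.variation_smul]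

lemma tvNorm_sub_le (μ ν : SignedMeasure E) : tvNorm (μ - ν) ≤ tvNorm μ + tvNorm ν := by
  have h : (μ - ν).totalVariation univ ≤ μ.totalVariation univ + ν.totalVariation univ := by
    simp only [SignedMeasure.totalVariation_eq_variation]
    exact VectorMeasure.variation_sub_le univ
  rw [tvNorm, tvNorm, tvNorm, ← ENNReal.toReal_add (measure_ne_top _ _) (measure_ne_top _ _)]
  exact ENNReal.toReal_mono (by finiteness) h

lemma tvNorm_of_nonneg {σ : SignedMeasure E} (hσ : 0 ≤ σ) : tvNorm σ = σ univ := by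
  set m := σ.toMeasureOfZeroLE univ .univ ((VectorMeasure.le_restrict_univ_iff_le _ _).2 hσ)
  have hm : m.toSignedMeasure = σ := SignedMeasure.toMeasureOfZeroLE_toSignedMeasure _ _
  rw [← hm, tvNorm, SignedMeasure.totalVariation_eq_variation, Measure.variation_toSignedMeasure,
    Measure.toSignedMeasure_apply_measurable .univ, measureReal_def]

lemma tvNorm_eq_posPart_add_negPart (μ : SignedMeasure E) :
    tvNorm μ = μ.toJordanDecomposition.posPart.real univ
      + μ.toJordanDecomposition.negPart.real univ := by
  rw [tvNorm, SignedMeasure.totalVariation, ← measureReal_def, measureReal_add_apply]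

end TotalVariation

namespace MeasureTheory.Measure

lemma toSignedMeasure_eq_real_univ_smul {E : Type*} [MeasurableSpace E]
    (p : Measure E) [IsFiniteMeasure p] [NeZero p] :
    p.toSignedMeasure = p.real univ • ((p univ)⁻¹ • p).toSignedMeasure := by
  ext i hi
  have hp : (p univ).toReal ≠ 0 := measureReal_univ_ne_zero
  simp [toSignedMeasure_apply_measurable hi, measureReal_def, ← mul_assoc,
    ENNReal.toReal_inv, mul_inv_cancel₀ hp]

end MeasureTheory.Measure

def DoeblinCondition {E : Type*} [MeasurableSpace E] (S : SignedMeasure E →ₗ[ℝ] SignedMeasure E)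
    (α : ℝ) (ν : Measure E) [IsFiniteMeasure ν] : Prop :=
  ∀ μ : ProbabilityMeasure E, α • ν.toSignedMeasure ≤ S (μ : Measure E).toSignedMeasure

namespace DoeblinCondition

variable {E : Type*} [MeasurableSpace E] {S : SignedMeasure E →ₗ[ℝ] SignedMeasure E} {α : ℝ}
  {ν : Measure E} [IsProbabilityMeasure ν]

lemma tvNorm_map_sub_smul (hD : DoeblinCondition S α ν)
    (hmass : ∀ μ : SignedMeasure E, (S μ) univ = μ univ) (P : Measure E) [IsProbabilityMeasure P] :
    tvNorm (S P.toSignedMeasure - α • ν.toSignedMeasure) = 1 - α := by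
  have hP : α • ν.toSignedMeasure ≤ S P.toSignedMeasure := hD ⟨P, inferInstance⟩
  rw [tvNorm_of_nonneg (sub_nonneg.2 hP), sub_apply, smul_apply, hmass]
  simp [Measure.toSignedMeasure_apply_measurable MeasurableSet.univ]

lemma tvNorm_map_sub_map_le_two_mul (hD : DoeblinCondition S α ν)
    (hmass : ∀ μ : SignedMeasure E, (S μ) univ = μ univ)
    (P Q : Measure E) [IsProbabilityMeasure P] [IsProbabilityMeasure Q] :
    tvNorm (S P.toSignedMeasure - S Q.toSignedMeasure) ≤ 2 * (1 - α) :=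
  calc tvNorm (S P.toSignedMeasure - S Q.toSignedMeasure)
      = tvNorm ((S P.toSignedMeasure - α • ν.toSignedMeasure)
          - (S Q.toSignedMeasure - α • ν.toSignedMeasure)) := by rw [sub_sub_sub_cancel_right]
    _ ≤ tvNorm (S P.toSignedMeasure - α • ν.toSignedMeasure)
          + tvNorm (S Q.toSignedMeasure - α • ν.toSignedMeasure) := tvNorm_sub_le _ _
    _ = 2 * (1 - α) := by
      rw [hD.tvNorm_map_sub_smul hmass, hD.tvNorm_map_sub_smul hmass]
      ring

lemma tvNorm_map_sub_map_le (hD : DoeblinCondition S α ν)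
    (hmass : ∀ μ : SignedMeasure E, (S μ) univ = μ univ)
    (p q : Measure E) [IsFiniteMeasure p] [IsFiniteMeasure q] (hpq : p.real univ = q.real univ) :
    tvNorm (S p.toSignedMeasure - S q.toSignedMeasure) ≤ (1 - α) * (p.real univ + q.real univ) := by
  rcases eq_zero_or_neZero p with rfl | hp
  · obtain rfl : q = 0 := by
      rwa [measureReal_zero_apply, eq_comm, measureReal_eq_zero_iff,
        Measure.measure_univ_eq_zero] at hpq
    simp [tvNorm, SignedMeasure.totalVariation_zero]
  have : NeZero q := ⟨fun hq => measureReal_univ_ne_zero (μ := p) (by rw [hpq, hq]; rfl)⟩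
  have hsplit : S p.toSignedMeasure - S q.toSignedMeasure = p.real univ •
      (S ((p univ)⁻¹ • p).toSignedMeasure - S ((q univ)⁻¹ • q).toSignedMeasure) := by
    conv_lhs => rw [p.toSignedMeasure_eq_real_univ_smul, q.toSignedMeasure_eq_real_univ_smul,
      map_smul, map_smul, ← hpq]
    exact (smul_sub _ _ _).symm
  rw [hsplit, tvNorm_smul, abs_of_nonneg measureReal_nonneg]
  calc p.real univ * tvNorm _
      ≤ p.real univ * (2 * (1 - α)) := by
        gcongr
        exact hD.tvNorm_map_sub_map_le_two_mul hmass _ _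
    _ = (1 - α) * (p.real univ + q.real univ) := by rw [← hpq]; ring

end DoeblinCondition

theorem doeblin_contraction_general
    {E : Type*} [MeasurableSpace E]
    (S : SignedMeasure E →ₗ[ℝ] SignedMeasure E)
    (hmass : ∀ μ : SignedMeasure E, (S μ) Set.univ = μ Set.univ)
    (α : ℝ)
    (ν : Measure E) [IsProbabilityMeasure ν]
    (hDoeblin : ∀ μ : ProbabilityMeasure E,
      α • ν.toSignedMeasure ≤ S (μ : Measure E).toSignedMeasure)
    (μ₁ μ₂ : SignedMeasure E) (hmasseq : μ₁ Set.univ = μ₂ Set.univ) :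
    tvNorm (S μ₁ - S μ₂) ≤ (1 - α) * tvNorm (μ₁ - μ₂) := by
  set j := (μ₁ - μ₂).toJordanDecomposition
  have hjordan : μ₁ - μ₂ = j.posPart.toSignedMeasure - j.negPart.toSignedMeasure :=
    (μ₁ - μ₂).toSignedMeasure_toJordanDecomposition.symm
  have hparts : j.posPart.real univ = j.negPart.real univ := by
    have := (μ₁ - μ₂).apply_eq_posPart_real_sub_negPart_real MeasurableSet.univ
    rw [sub_apply, hmasseq, sub_self] at this
    linarith
  calc tvNorm (S μ₁ - S μ₂)
      = tvNorm (S j.posPart.toSignedMeasure - S j.negPart.toSignedMeasure) := by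
        rw [← map_sub, ← map_sub, hjordan]
    _ ≤ (1 - α) * (j.posPart.real univ + j.negPart.real univ) :=
        DoeblinCondition.tvNorm_map_sub_map_le hDoeblin hmass _ _ hparts
    _ = (1 - α) * tvNorm (μ₁ - μ₂) := by rw [tvNorm_eq_posPart_add_negPart]

/-- **Contraction under the Doeblin condition.**
Let `S` be a stochastic operator on the finite signed measures of a measurable space `E`
(linear, positivity-preserving and mass-preserving) satisfying the Doeblin condition:
there are `α ∈ (0,1)` and a probability measure `ν` with `S μ ≥ α ν` for every
probability measure `μ`.  Then for any finite signed measures `μ₁, μ₂` with the same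
total mass, `‖S μ₁ - S μ₂‖_TV ≤ (1 - α) ‖μ₁ - μ₂‖_TV`. -/
theorem doeblin_contraction
    {E : Type*} [MeasurableSpace E]
    (S : SignedMeasure E →ₗ[ℝ] SignedMeasure E)
    (hpos : ∀ μ : SignedMeasure E, 0 ≤ μ → 0 ≤ S μ)
    (hmass : ∀ μ : SignedMeasure E, (S μ) Set.univ = μ Set.univ)
    (α : ℝ) (hα : 0 < α) (hα1 : α < 1)
    (ν : Measure E) [IsProbabilityMeasure ν]
    (hDoeblin : ∀ μ : ProbabilityMeasure E,
      α • ν.toSignedMeasure ≤ S (μ : Measure E).toSignedMeasure)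
    (μ₁ μ₂ : SignedMeasure E) (hmasseq : μ₁ Set.univ = μ₂ Set.univ) :
    tvNorm (S μ₁ - S μ₂) ≤ (1 - α) * tvNorm (μ₁ - μ₂) :=
  doeblin_contraction_general S hmass α ν hDoeblin μ₁ μ₂ hmasseq
end

section
/- Assume p is bounded, Lipschitz and nonnegative, let L be its Lipschitz constant with respect to the first variable, and let n be a finite nonnegative Borel measure on [0,∞) with L < 1/‖n‖_TV. Then there exists a unique N ∈ ℝ satisfying N = ∫_0^∞ p(N,s) dn(s). Moreover, if n_1, n_2 are two such measures (with L < 1/‖n_1‖_TV) and N_1, N_2 are the corresponding solutions, then |N_1 − N_2| ≤ ‖p‖_∞ ‖n_1 − n_2‖_TV / (1 − L‖n_1‖_TV). -/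
open MeasureTheory Real Set

/-- Total variation distance between two (finite) nonnegative Borel measures:
`‖μ - ν‖_TV = sup_A [(μ(A) - ν(A)) + (ν(Aᶜ) - μ(Aᶜ))]`. -/
noncomputable def tvDist (μ ν : Measure ℝ) : ℝ :=
  sSup {r : ℝ | ∃ A : Set ℝ, MeasurableSet A ∧
    r = (((μ A).toReal - (ν A).toReal) + ((ν Aᶜ).toReal - (μ Aᶜ).toReal))}

/-!
Clamping both arguments of `p` to `[0, ∞)` changes no integral against a measure carried by
`[0, ∞)`, and makes `N ↦ ∫ p(N, s) dn(s)` a map on all of `ℝ` that is `L n(ℝ)`-Lipschitz, hence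
a contraction; its Banach fixed point is the unique solution. For the stability estimate, the
fixed-point maps of `n₁` and `n₂` differ uniformly by at most `P ‖n₁ - n₂‖_TV` (split the integrals
along a Hahn decomposition of `n₁ - n₂`), and a fixed point of a `κ`-contraction moves by at most
`δ / (1 - κ)` under a uniform perturbation of size `δ`.
-/

open scoped NNReal

theorem Measurable.integrable_of_nonneg_of_le {α : Type*} [MeasurableSpace α] {μ : Measure α}
    [IsFiniteMeasure μ] {g : α → ℝ} {P : ℝ} (hg : Measurable g) (hg0 : ∀ x, 0 ≤ g x)
    (hgP : ∀ x, g x ≤ P) : Integrable g μ :=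
  .of_bound hg.aestronglyMeasurable P
    (ae_of_all _ fun x => by rw [norm_of_nonneg (hg0 x)]; exact hgP x)

theorem integral_sub_integral_le_of_measure_le {α : Type*} [MeasurableSpace α] {μ ν : Measure α}
    [IsFiniteMeasure μ] [IsFiniteMeasure ν] (hνμ : ν ≤ μ) {g : α → ℝ} {P : ℝ}
    (hg : Integrable g μ) (hgP : ∀ x, g x ≤ P) :
    ∫ x, g x ∂μ - ∫ x, g x ∂ν ≤ P * (μ.real univ - ν.real univ) := by
  have h := integral_mono_measure hνμ (ae_of_all _ fun x => sub_nonneg.2 (hgP x))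
    ((integrable_const P).sub hg)
  rw [integral_sub (integrable_const P) (hg.mono_measure hνμ), integral_sub (integrable_const P) hg,
    integral_const, integral_const, smul_eq_mul, smul_eq_mul] at h
  linarith

section TotalVariation

variable {μ ν : Measure ℝ}

theorem tvDist_comm : tvDist μ ν = tvDist ν μ := by
  unfold tvDist
  congr 1
  ext r
  constructor <;>
  · rintro ⟨A, hA, rfl⟩
    exact ⟨Aᶜ, hA.compl, by rw [compl_compl]; ring⟩

theorem le_tvDist [IsFiniteMeasure μ] [IsFiniteMeasure ν] {A : Set ℝ} (hA : MeasurableSet A) :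
    (μ.real A - ν.real A) + (ν.real Aᶜ - μ.real Aᶜ) ≤ tvDist μ ν := by
  refine le_csSup ⟨μ.real univ + ν.real univ, ?_⟩ ⟨A, hA, rfl⟩
  rintro r ⟨B, -, rfl⟩
  have hμB : μ.real B ≤ μ.real univ := measureReal_mono (subset_univ B)
  have hνB : ν.real Bᶜ ≤ ν.real univ := measureReal_mono (subset_univ Bᶜ)
  have hνB' : 0 ≤ ν.real B := measureReal_nonneg
  have hμB' : 0 ≤ μ.real Bᶜ := measureReal_nonneg
  simp only [← measureReal_def]
  linarith

theorem integral_sub_integral_le_mul_tvDist [IsFiniteMeasure μ] [IsFiniteMeasure ν]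
    {g : ℝ → ℝ} {P : ℝ} (hg : Measurable g) (hg0 : ∀ x, 0 ≤ g x) (hgP : ∀ x, g x ≤ P) :
    ∫ x, g x ∂μ - ∫ x, g x ∂ν ≤ P * tvDist μ ν := by
  have hint (m : Measure ℝ) [IsFiniteMeasure m] : Integrable g m :=
    hg.integrable_of_nonneg_of_le hg0 hgP
  obtain ⟨s, hs, hνμ, hμν⟩ := exists_isHahnDecomposition ν μ
  have h_on : ∫ x in s, g x ∂μ - ∫ x in s, g x ∂ν ≤ P * (μ.real s - ν.real s) := by
    simpa [measureReal_restrict_apply_univ] using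
      integral_sub_integral_le_of_measure_le hνμ (hint μ).restrict hgP
  have h_off : ∫ x in sᶜ, g x ∂μ ≤ ∫ x in sᶜ, g x ∂ν :=
    integral_mono_measure hμν (ae_of_all _ hg0) (hint ν).restrict
  have h_compl : μ.real sᶜ ≤ ν.real sᶜ := by
    simpa [measureReal_def] using
      ENNReal.toReal_mono (measure_ne_top _ _) (Measure.le_iff'.1 hμν univ)
  have hP : 0 ≤ P := (hg0 0).trans (hgP 0)
  rw [← integral_add_compl hs (hint μ), ← integral_add_compl hs (hint ν)]
  nlinarith [le_tvDist (μ := μ) (ν := ν) hs]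

theorem abs_integral_sub_integral_le_mul_tvDist [IsFiniteMeasure μ] [IsFiniteMeasure ν]
    {g : ℝ → ℝ} {P : ℝ} (hg : Measurable g) (hg0 : ∀ x, 0 ≤ g x) (hgP : ∀ x, g x ≤ P) :
    |∫ x, g x ∂μ - ∫ x, g x ∂ν| ≤ P * tvDist μ ν := by
  have := integral_sub_integral_le_mul_tvDist (μ := ν) (ν := μ) hg hg0 hgP
  rw [tvDist_comm] at this
  exact abs_sub_le_iff.2 ⟨integral_sub_integral_le_mul_tvDist hg hg0 hgP, this⟩

end TotalVariation

theorem LipschitzOnWith.comp_max_zero {E : Type*} [PseudoMetricSpace E] {f : ℝ → E} {K : ℝ≥0}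
    (hf : LipschitzOnWith K f (Ici 0)) : LipschitzWith K fun x => f (max x 0) := by
  have h := hf.comp (LipschitzWith.id.max_const 0).lipschitzOnWith (s := univ)
    fun x _ => le_max_right x 0
  rwa [mul_one, lipschitzOnWith_univ] at h

theorem ContractingWith.integral {α : Type*} [MeasurableSpace α] {μ : Measure α}
    [IsFiniteMeasure μ] {q : ℝ → α → ℝ} {L : ℝ≥0} (hq : ∀ N, Integrable (q N) μ)
    (hL : ∀ s, LipschitzWith L (q · s)) (hκ : L * (μ univ).toNNReal < 1) :
    ContractingWith (L * (μ univ).toNNReal) fun N => ∫ s, q N s ∂μ := by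
  refine ⟨hκ, LipschitzWith.of_dist_le_mul fun N₁ N₂ => ?_⟩
  rw [dist_eq_norm, ← integral_sub (hq N₁) (hq N₂)]
  calc ‖∫ s, (q N₁ s - q N₂ s) ∂μ‖ ≤ L * dist N₁ N₂ * μ.real univ :=
        norm_integral_le_of_norm_le_const
          (ae_of_all _ fun s => by simpa [dist_eq_norm] using (hL s).dist_le_mul N₁ N₂)
    _ = ↑(L * (μ univ).toNNReal) * dist N₁ N₂ := by
        rw [measureReal_def, NNReal.coe_mul, ENNReal.coe_toNNReal_eq_toReal]; ring

def extendNonneg (p : ℝ → ℝ → ℝ) (N s : ℝ) : ℝ := p (max N 0) (max s 0)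

section extendNonneg

variable {p : ℝ → ℝ → ℝ}

theorem extendNonneg_of_nonneg {N s : ℝ} (hN : 0 ≤ N) (hs : 0 ≤ s) :
    extendNonneg p N s = p N s := by
  simp [extendNonneg, hN, hs]

theorem lipschitzWith_extendNonneg_left {L : ℝ≥0}
    (hL : ∀ N₁ N₂ s, 0 ≤ N₁ → 0 ≤ N₂ → 0 ≤ s → |p N₁ s - p N₂ s| ≤ L * |N₁ - N₂|) (s : ℝ) :
    LipschitzWith L fun N => extendNonneg p N s :=
  LipschitzOnWith.comp_max_zero (f := (p · (max s 0))) <|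
    LipschitzOnWith.of_dist_le_mul fun _ h₁ _ h₂ => hL _ _ _ h₁ h₂ (le_max_right s 0)

theorem lipschitzWith_extendNonneg_right {K : ℝ}
    (hK : ∀ N₁ s₁ N₂ s₂, 0 ≤ N₁ → 0 ≤ s₁ → 0 ≤ N₂ → 0 ≤ s₂ →
      |p N₁ s₁ - p N₂ s₂| ≤ K * (|N₁ - N₂| + |s₁ - s₂|)) (N : ℝ) :
    LipschitzWith K.toNNReal (extendNonneg p N) :=
  LipschitzOnWith.comp_max_zero <| LipschitzOnWith.of_dist_le' fun _ h₁ _ h₂ => by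
    simpa [dist_eq_norm] using hK _ _ _ _ (le_max_right N 0) h₁ (le_max_right N 0) h₂

theorem integral_extendNonneg {n : Measure ℝ} (hn : n (Iio 0) = 0) {N : ℝ} (hN : 0 ≤ N) :
    ∫ s, extendNonneg p N s ∂n = ∫ s, p N s ∂n := by
  have hs : ∀ᵐ s ∂n, 0 ≤ s := by simpa [ae_iff, ← Iio_def] using hn
  exact integral_congr_ae (hs.mono fun s hs => extendNonneg_of_nonneg hN hs)

end extendNonneg

theorem firing_rate_fixed_point_general
    (p : ℝ → ℝ → ℝ) (L P : ℝ)
    (hp_nonneg : ∀ N s, 0 ≤ N → 0 ≤ s → 0 ≤ p N s)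
    (hp_lip : ∃ K : ℝ, ∀ N₁ s₁ N₂ s₂, 0 ≤ N₁ → 0 ≤ s₁ → 0 ≤ N₂ → 0 ≤ s₂ →
      |p N₁ s₁ - p N₂ s₂| ≤ K * (|N₁ - N₂| + |s₁ - s₂|))
    (hP : ∀ N s, 0 ≤ N → 0 ≤ s → p N s ≤ P)
    (hL : ∀ N₁ N₂ s, 0 ≤ N₁ → 0 ≤ N₂ → 0 ≤ s → |p N₁ s - p N₂ s| ≤ L * |N₁ - N₂|) :
    (∀ n : Measure ℝ, IsFiniteMeasure n → n (Set.Iio 0) = 0 →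
      L * (n Set.univ).toReal < 1 →
      ∃! N : ℝ, 0 ≤ N ∧ N = ∫ s, p N s ∂n) ∧
    (∀ n₁ n₂ : Measure ℝ, IsFiniteMeasure n₁ → IsFiniteMeasure n₂ →
      n₁ (Set.Iio 0) = 0 → n₂ (Set.Iio 0) = 0 →
      L * (n₁ Set.univ).toReal < 1 → L * (n₂ Set.univ).toReal < 1 →
      ∀ N₁ N₂ : ℝ, 0 ≤ N₁ → 0 ≤ N₂ →
        N₁ = ∫ s, p N₁ s ∂n₁ → N₂ = ∫ s, p N₂ s ∂n₂ →
        |N₁ - N₂| ≤ P * tvDist n₁ n₂ / (1 - L * (n₁ Set.univ).toReal)) := by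
  obtain ⟨K, hK⟩ := hp_lip
  lift L to ℝ≥0 using (abs_nonneg _).trans (by simpa using hL 1 0 0 zero_le_one le_rfl le_rfl)
  set q := extendNonneg p
  have hq_meas N : Measurable (q N) := (lipschitzWith_extendNonneg_right hK N).continuous.measurable
  have hq0 N s : 0 ≤ q N s := hp_nonneg _ _ (le_max_right N 0) (le_max_right s 0)
  have hqP N s : q N s ≤ P := hP _ _ (le_max_right N 0) (le_max_right s 0)
  have hF (n : Measure ℝ) [IsFiniteMeasure n] (hκ : L * (n univ).toReal < 1) :
      ContractingWith (L * (n univ).toNNReal) fun N => ∫ s, q N s ∂n :=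
    .integral (fun N => (hq_meas N).integrable_of_nonneg_of_le (hq0 N) (hqP N))
      (lipschitzWith_extendNonneg_left hL)
      (by rwa [← NNReal.coe_lt_coe, NNReal.coe_mul, ENNReal.coe_toNNReal_eq_toReal])
  have hfix (n : Measure ℝ) (hn : n (Iio 0) = 0) (N : ℝ) (hN : 0 ≤ N) :
      N = ∫ s, p N s ∂n ↔ Function.IsFixedPt (fun N => ∫ s, q N s ∂n) N := by
    rw [Function.IsFixedPt, integral_extendNonneg hn hN, eq_comm]
  refine ⟨fun n _ hn hκ => ?_, fun n₁ n₂ _ _ hn₁ hn₂ hκ₁ _ N₁ N₂ hN₁ hN₂ h₁ h₂ => ?_⟩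
  · have hN : 0 ≤ (hF n hκ).fixedPoint := by
      rw [← (hF n hκ).fixedPoint_isFixedPt]
      exact integral_nonneg (hq0 _)
    exact ⟨_, ⟨hN, (hfix n hn _ hN).2 (hF n hκ).fixedPoint_isFixedPt⟩,
      fun N ⟨hN, hNeq⟩ => (hF n hκ).fixedPoint_unique ((hfix n hn N hN).1 hNeq)⟩
  · have := (hF n₁ hκ₁).dist_fixedPoint_fixedPoint_of_dist_le' _ ((hfix n₁ hn₁ N₁ hN₁).1 h₁)
      ((hfix n₂ hn₂ N₂ hN₂).1 h₂) fun N =>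
        abs_integral_sub_integral_le_mul_tvDist (hq_meas N) (hq0 N) (hqP N)
    simpa [dist_eq_norm, ENNReal.coe_toNNReal_eq_toReal] using this

/-- **Existence, uniqueness and stability of the total firing rate.**
Assume `p : [0,∞) × [0,∞) → [0,∞)` is bounded (with supremum `P`), Lipschitz
(jointly in both variables), and `L` is the smallest constant such that
`|p(N₁,s) - p(N₂,s)| ≤ L |N₁ - N₂|`.  Then for any finite nonnegative Borel measure `n`
supported on `[0,∞)` with `L ‖n‖_TV < 1` there is a unique `N` with
`N = ∫ p(N,s) dn(s)`, and if `n₁, n₂` are two such measures with corresponding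
solutions `N₁, N₂`, then `|N₁ - N₂| ≤ P ‖n₁ - n₂‖_TV / (1 - L ‖n₁‖_TV)`. -/
theorem firing_rate_fixed_point
    (p : ℝ → ℝ → ℝ) (L P : ℝ)
    (hp_nonneg : ∀ N s, 0 ≤ N → 0 ≤ s → 0 ≤ p N s)
    (hp_lip : ∃ K : ℝ, ∀ N₁ s₁ N₂ s₂, 0 ≤ N₁ → 0 ≤ s₁ → 0 ≤ N₂ → 0 ≤ s₂ →
      |p N₁ s₁ - p N₂ s₂| ≤ K * (|N₁ - N₂| + |s₁ - s₂|))
    (hP : ∀ N s, 0 ≤ N → 0 ≤ s → p N s ≤ P)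
    (hPleast : ∀ P' : ℝ, (∀ N s, 0 ≤ N → 0 ≤ s → p N s ≤ P') → P ≤ P')
    (hL : ∀ N₁ N₂ s, 0 ≤ N₁ → 0 ≤ N₂ → 0 ≤ s → |p N₁ s - p N₂ s| ≤ L * |N₁ - N₂|)
    (hLleast : ∀ L' : ℝ,
      (∀ N₁ N₂ s, 0 ≤ N₁ → 0 ≤ N₂ → 0 ≤ s → |p N₁ s - p N₂ s| ≤ L' * |N₁ - N₂|) →
      L ≤ L') :
    (∀ n : Measure ℝ, IsFiniteMeasure n → n (Set.Iio 0) = 0 →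
      L * (n Set.univ).toReal < 1 →
      ∃! N : ℝ, 0 ≤ N ∧ N = ∫ s, p N s ∂n) ∧
    (∀ n₁ n₂ : Measure ℝ, IsFiniteMeasure n₁ → IsFiniteMeasure n₂ →
      n₁ (Set.Iio 0) = 0 → n₂ (Set.Iio 0) = 0 →
      L * (n₁ Set.univ).toReal < 1 → L * (n₂ Set.univ).toReal < 1 →
      ∀ N₁ N₂ : ℝ, 0 ≤ N₁ → 0 ≤ N₂ →
        N₁ = ∫ s, p N₁ s ∂n₁ → N₂ = ∫ s, p N₂ s ∂n₂ →
        |N₁ - N₂| ≤ P * tvDist n₁ n₂ / (1 - L * (n₁ Set.univ).toReal)) :=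
  firing_rate_fixed_point_general p L P hp_nonneg hp_lip hP hL
end

section
/- Assume p : [0,∞) × [0,∞) → [0,∞) is bounded and Lipschitz, with p_min·1_{[s_*,∞)}(s) ≤ p(N,s) ≤ p_max for all N, s ≥ 0 (where s_*, p_min, p_max > 0), and that its Lipschitz constant L with respect to the first variable satisfies L < (p_max)^{−2} (s_*²/2 + s_*/p_min + 1/p_min²)^{−1}. Then there exists a unique N_* > 0 such that N_* · ∫_0^∞ exp(−∫_0^s p(N_*,τ) dτ) ds = 1; consequently, the probability measure n_* with density s ↦ N_* exp(−∫_0^s p(N_*,τ) dτ) with respect to Lebesgue measure is the unique probability measure that is a stationary solution of the age-structured model, i.e., the unique probability measure with a C¹ density n_* satisfying ∂_s n_*(s) + p(N_*,s) n_*(s) = 0 for s > 0 and n_*(0) = N_* = ∫_0^∞ p(N_*,s) n_*(s) ds. -/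
/-!
Write `r_N(s) = p(N,s)`, `H_N(s) = ∫_0^s r_N` and `I(N) = ∫_0^∞ e^{-H_N}`. A stationary density
solves the linear equation `f' = -r_N f`, so it equals `f(0) e^{-H_N} = N e^{-H_N}`; its mass is
`N I(N)`, and `∫ r_N e^{-H_N} = 1` makes the boundary condition `N = ∫ p(N,·) f` automatic. Thus
stationary states correspond exactly to the solutions of `N I(N) = 1`.

Since `r_N ≤ p_max`, `I ≥ 1/p_max`, so `N ↦ N I(N)` reaches `1` on `[0, p_max]`. Since `r_N ≥ 0`,
and `r_N ≥ p_min` beyond `s_*`, `H_N(s) ≥ p_min (s - s_*)₊`, whence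
`|e^{-H_{N₁}(s)} - e^{-H_{N₂}(s)}| ≤ L |N₁ - N₂| s e^{-p_min (s - s_*)₊}`; integrating,
`I` is Lipschitz with constant `L C`, `C = s_*²/2 + s_*/p_min + 1/p_min²`. Two solutions satisfy
`(N₁ - N₂) I(N₁) I(N₂) = I(N₂) - I(N₁)`, so `|N₁ - N₂| ≤ p_max² L C |N₁ - N₂|`, forcing `N₁ = N₂`.
-/

open MeasureTheory Real Set

/-- `f` is (the density of) a stationary solution of the nonlinear age-structured model,
with global activity `N`: `f ∈ C([0,∞)) ∩ C¹((0,∞))` is a nonnegative probability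
density satisfying `∂_s f(s) + p(N,s) f(s) = 0` for `s > 0` and
`f(0) = N = ∫_0^∞ p(N,s) f(s) ds`. -/
def IsStationaryDensityAge (p : ℝ → ℝ → ℝ) (f : ℝ → ℝ) (N : ℝ) : Prop :=
  ContinuousOn f (Set.Ici 0) ∧
  (∀ s ∈ Set.Ioi (0:ℝ), HasDerivAt f (-(p N s * f s)) s) ∧
  (∀ s ∈ Set.Ici (0:ℝ), 0 ≤ f s) ∧
  (∫ s in Set.Ici (0:ℝ), f s) = 1 ∧
  f 0 = N ∧
  N = ∫ s in Set.Ici (0:ℝ), p N s * f s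

open Filter Topology

noncomputable section

namespace AgeStructured

theorem abs_exp_neg_sub_exp_neg_le {x y c : ℝ} (hx : c ≤ x) (hy : c ≤ y) :
    |exp (-x) - exp (-y)| ≤ exp (-c) * |x - y| := by
  wlog hxy : y ≤ x generalizing x y
  · rw [abs_sub_comm, abs_sub_comm x]
    exact this hy hx (le_of_not_ge hxy)
  have hfactor : exp (-y) - exp (-x) = exp (-y) * (1 - exp (y - x)) := by
    rw [mul_sub, mul_one, ← exp_add]
    ring_nf
  rw [abs_sub_comm, abs_of_nonneg (sub_nonneg.2 (exp_le_exp.2 (neg_le_neg hxy))),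
    abs_of_nonneg (sub_nonneg.2 hxy), hfactor]
  exact mul_le_mul (exp_le_exp.2 (neg_le_neg hy)) (by linarith [add_one_le_exp (y - x)])
    (sub_nonneg.2 (exp_le_one_iff.2 (by linarith))) (exp_pos _).le

section FixedPoint

variable {I : ℝ → ℝ} {a K : ℝ}

theorem exists_pos_mul_eq_one (hI : Continuous I) (ha : 0 < a) (hIa : ∀ x, a ≤ I x) :
    ∃ x, 0 < x ∧ x * I x = 1 := by
  have hmem : (1 : ℝ) ∈ Icc (0 * I 0) (a⁻¹ * I a⁻¹) :=
    ⟨by simp, (inv_mul_cancel₀ ha.ne').symm.le.trans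
      (mul_le_mul_of_nonneg_left (hIa _) (inv_nonneg.2 ha.le))⟩
  obtain ⟨x, hx, hfix⟩ :=
    intermediate_value_Icc (inv_nonneg.2 ha.le) (continuous_id.mul hI).continuousOn hmem
  refine ⟨x, hx.1.lt_of_ne ?_, hfix⟩
  rintro rfl
  simp at hfix

theorem eq_of_mul_eq_one (ha : 0 < a) (hIa : ∀ x, a ≤ I x) (hK : K < a ^ 2)
    (hI : ∀ x y, |I x - I y| ≤ K * |x - y|) {x y : ℝ} (hx : x * I x = 1) (hy : y * I y = 1) :
    x = y := by
  have hprod : a ^ 2 ≤ I x * I y := by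
    rw [sq]
    exact mul_le_mul (hIa x) (hIa y) ha.le (ha.le.trans (hIa x))
  have hkey : (x - y) * (I x * I y) = I y - I x := by
    linear_combination I y * hx - I x * hy
  have hbound : |x - y| * a ^ 2 ≤ K * |x - y| :=
    calc |x - y| * a ^ 2 ≤ |x - y| * (I x * I y) :=
          mul_le_mul_of_nonneg_left hprod (abs_nonneg _)
      _ = |I y - I x| := by
          rw [← hkey, abs_mul, abs_of_nonneg ((sq_nonneg a).trans hprod)]
      _ ≤ K * |x - y| := by rw [abs_sub_comm x]; exact hI y x
  by_contra hne
  nlinarith [abs_pos.2 (sub_ne_zero.2 hne)]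

theorem existsUnique_pos_mul_eq_one (ha : 0 < a) (hIa : ∀ x, a ≤ I x) (hK : K < a ^ 2)
    (hI : ∀ x y, |I x - I y| ≤ K * |x - y|) : ∃! x, 0 < x ∧ x * I x = 1 := by
  have hcont : Continuous I :=
    (LipschitzWith.of_dist_le' (K := K) fun x y => by
      simpa only [Real.dist_eq] using hI x y).continuous
  obtain ⟨x, hx⟩ := exists_pos_mul_eq_one hcont ha hIa
  exact ⟨x, hx, fun y hy => eq_of_mul_eq_one ha hIa hK hI hy.2 hx.2⟩

end FixedPoint

section Hazard

def cumHazard (r : ℝ → ℝ) (s : ℝ) : ℝ := ∫ τ in (0 : ℝ)..s, r τ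

def meanLifetime (r : ℝ → ℝ) : ℝ := ∫ s in Ici (0 : ℝ), exp (-cumHazard r s)

structure IsHazardRate (pmin sstar : ℝ) (r : ℝ → ℝ) : Prop where
  continuous : Continuous r
  nonneg : ∀ s, 0 ≤ r s
  pmin_le : ∀ s, sstar ≤ s → pmin ≤ r s

variable {r r₁ r₂ f : ℝ → ℝ} {pmin pmax sstar s : ℝ}

@[simp] theorem cumHazard_zero : cumHazard r 0 = 0 := intervalIntegral.integral_same

theorem hasDerivAt_cumHazard (hr : Continuous r) (s : ℝ) : HasDerivAt (cumHazard r) (r s) s :=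
  (hr.integral_hasStrictDerivAt 0 s).hasDerivAt

theorem continuous_cumHazard (hr : Continuous r) : Continuous (cumHazard r) :=
  continuous_iff_continuousAt.2 fun s => (hasDerivAt_cumHazard hr s).continuousAt

theorem cumHazard_le_mul (hr : Continuous r) (hup : ∀ s, r s ≤ pmax) (hs : 0 ≤ s) :
    cumHazard r s ≤ pmax * s := by
  simpa [cumHazard, mul_comm] using intervalIntegral.integral_mono_on (μ := volume) hs
    (hr.intervalIntegrable 0 s) intervalIntegrable_const fun τ _ => hup τ

theorem mul_max_sub_le_cumHazard (hr : IsHazardRate pmin sstar r) (hsstar : 0 ≤ sstar)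
    (hs : 0 ≤ s) : pmin * max (s - sstar) 0 ≤ cumHazard r s := by
  have hint := hr.continuous.intervalIntegrable (μ := volume)
  rcases le_total s sstar with hle | hle
  · rw [max_eq_right (sub_nonpos.2 hle), mul_zero]
    exact intervalIntegral.integral_nonneg hs fun τ _ => hr.nonneg τ
  · rw [max_eq_left (sub_nonneg.2 hle), cumHazard,
      ← intervalIntegral.integral_add_adjacent_intervals (hint 0 sstar) (hint sstar s)]
    have hhead : 0 ≤ ∫ τ in (0 : ℝ)..sstar, r τ :=
      intervalIntegral.integral_nonneg hsstar fun τ _ => hr.nonneg τ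
    have htail : pmin * (s - sstar) ≤ ∫ τ in sstar..s, r τ := by
      simpa [mul_comm] using intervalIntegral.integral_mono_on hle intervalIntegrable_const
        (hint sstar s) fun τ hτ => hr.pmin_le τ hτ.1
    linarith

theorem abs_cumHazard_sub_le {δ : ℝ} (hr₁ : Continuous r₁) (hr₂ : Continuous r₂)
    (hδ : ∀ s, |r₁ s - r₂ s| ≤ δ) (hs : 0 ≤ s) :
    |cumHazard r₁ s - cumHazard r₂ s| ≤ δ * s := by
  rw [cumHazard, cumHazard, ← intervalIntegral.integral_sub (hr₁.intervalIntegrable 0 s)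
    (hr₂.intervalIntegrable 0 s)]
  simpa [abs_of_nonneg hs] using
    intervalIntegral.norm_integral_le_of_norm_le_const (a := 0) (b := s)
      (f := fun τ => r₁ τ - r₂ τ) fun τ _ => (norm_eq_abs _).trans_le (hδ τ)

theorem tendsto_cumHazard_atTop (hr : IsHazardRate pmin sstar r) (hpmin : 0 < pmin)
    (hsstar : 0 ≤ sstar) : Tendsto (cumHazard r) atTop atTop := by
  refine tendsto_atTop_mono' atTop ?_
    ((tendsto_atTop_add_const_right _ (-sstar) tendsto_id).const_mul_atTop hpmin)
  filter_upwards [eventually_ge_atTop 0] with s hs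
  exact (mul_le_mul_of_nonneg_left (le_max_left _ 0) hpmin.le).trans
    (mul_max_sub_le_cumHazard hr hsstar hs)

theorem integrableOn_exp_neg_cumHazard (hr : IsHazardRate pmin sstar r) (hpmin : 0 < pmin)
    (hsstar : 0 ≤ sstar) : IntegrableOn (fun s => exp (-cumHazard r s)) (Ici 0) := by
  rw [integrableOn_Ici_iff_integrableOn_Ioi]
  refine Integrable.mono' ((exp_neg_integrableOn_Ioi 0 hpmin).const_mul (exp (pmin * sstar)))
    (continuous_cumHazard hr.continuous).neg.rexp.aestronglyMeasurable ?_
  filter_upwards [ae_restrict_mem measurableSet_Ioi] with s hs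
  rw [norm_of_nonneg (exp_pos _).le, ← exp_add, exp_le_exp]
  nlinarith [mul_max_sub_le_cumHazard hr hsstar (le_of_lt hs), le_max_left (s - sstar) 0]

theorem integral_mul_exp_neg_cumHazard (hr : IsHazardRate pmin sstar r) (hpmin : 0 < pmin)
    (hsstar : 0 ≤ sstar) : ∫ s in Ioi 0, r s * exp (-cumHazard r s) = 1 := by
  have hderiv : ∀ s ∈ Ioi (0 : ℝ),
      HasDerivAt (fun u => -exp (-cumHazard r u)) (r s * exp (-cumHazard r s)) s :=
    fun s _ => ((hasDerivAt_cumHazard hr.continuous s).neg.exp).neg.congr_deriv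
      (by simp only [Pi.neg_apply]; ring)
  have hlim : Tendsto (fun u => -exp (-cumHazard r u)) atTop (𝓝 0) := by
    simpa using
      (tendsto_exp_neg_atTop_nhds_zero.comp (tendsto_cumHazard_atTop hr hpmin hsstar)).neg
  rw [integral_Ioi_of_hasDerivAt_of_nonneg
    (continuous_cumHazard hr.continuous).neg.rexp.neg.continuousWithinAt hderiv
    (fun s _ => mul_nonneg (hr.nonneg s) (exp_pos _).le) hlim]
  simp

theorem hasDerivAt_const_mul_exp_neg_cumHazard (hr : Continuous r) (c s : ℝ) :
    HasDerivAt (fun u => c * exp (-cumHazard r u)) (-(r s * (c * exp (-cumHazard r s)))) s :=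
  (((hasDerivAt_cumHazard hr s).neg.exp).const_mul c).congr_deriv
    (by simp only [Pi.neg_apply]; ring)

theorem eq_mul_exp_neg_cumHazard_of_hasDerivAt (hr : Continuous r) (hf : ContinuousOn f (Ici 0))
    (hf' : ∀ s ∈ Ioi (0 : ℝ), HasDerivAt f (-(r s * f s)) s) (hs : 0 ≤ s) :
    f s = f 0 * exp (-cumHazard r s) := by
  set g := fun u => f u * exp (cumHazard r u)
  suffices g s = g 0 by
    simp only [g, cumHazard_zero, exp_zero, mul_one] at this
    rw [← this, mul_assoc, ← exp_add, add_neg_cancel, exp_zero, mul_one]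
  rcases hs.eq_or_lt with rfl | hs
  · rfl
  have hg' : ∀ u ∈ Ioo 0 s, HasDerivAt g 0 u := fun u hu =>
    ((hf' u hu.1).mul (hasDerivAt_cumHazard hr u).exp).congr_deriv (by ring)
  obtain ⟨c, -, hc⟩ := exists_hasDerivAt_eq_slope g (fun _ => 0) hs
    ((hf.mono Icc_subset_Ici_self).mul (continuous_cumHazard hr).rexp.continuousOn) hg'
  rw [eq_comm, div_eq_zero_iff, sub_eq_zero] at hc
  exact hc.resolve_right (by linarith)

end Hazard

section Weight

variable {pmin sstar : ℝ}

theorem integrableOn_and_integral_Ioi_mul_exp_neg_mul_sub (hpmin : 0 < pmin)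
    (hsstar : 0 ≤ sstar) :
    IntegrableOn (fun s => s * exp (-(pmin * (s - sstar)))) (Ioi sstar) ∧
      ∫ s in Ioi sstar, s * exp (-(pmin * (s - sstar))) = sstar / pmin + 1 / pmin ^ 2 := by
  set G := fun s => -(s / pmin + 1 / pmin ^ 2) * exp (-(pmin * (s - sstar)))
  have hderiv : ∀ s ∈ Ici sstar, HasDerivAt G (s * exp (-(pmin * (s - sstar)))) s := by
    intro s _
    have hlin := (((hasDerivAt_id s).sub_const sstar).const_mul pmin).neg
    refine ((((hasDerivAt_id s).div_const pmin).add_const _).neg.mul hlin.exp).congr_deriv ?_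
    simp only [Pi.neg_apply, id]
    field_simp
    ring
  have hlim : Tendsto G atTop (𝓝 0) := by
    -- in the variable `t = pmin (s - sstar)`, `G = -(t + pmin sstar + 1) e^{-t} / pmin²`
    have hdecay : Tendsto (fun t => (t + (pmin * sstar + 1)) * exp (-t)) atTop (𝓝 0) := by
      simpa [add_mul] using (tendsto_pow_mul_exp_neg_atTop_nhds_zero 1).add
        (tendsto_exp_neg_atTop_nhds_zero.const_mul (pmin * sstar + 1))
    have ht : Tendsto (fun s => pmin * (s - sstar)) atTop atTop :=
      (tendsto_atTop_add_const_right _ (-sstar) tendsto_id).const_mul_atTop hpmin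
    refine ((hdecay.comp ht).const_mul (-(1 / pmin ^ 2))).congr' (Eventually.of_forall fun s => ?_)
      |>.trans (by rw [mul_zero])
    simp only [Function.comp, G]
    field_simp
    ring
  have hnonneg : ∀ s ∈ Ioi sstar, 0 ≤ s * exp (-(pmin * (s - sstar))) :=
    fun s hs => mul_nonneg (hsstar.trans hs.le) (exp_pos _).le
  refine ⟨integrableOn_Ioi_deriv_of_nonneg' hderiv hnonneg hlim, ?_⟩
  rw [integral_Ioi_of_hasDerivAt_of_nonneg' hderiv hnonneg hlim]
  simp [G]

theorem integrableOn_and_integral_mul_exp_neg_mul_max_sub (hpmin : 0 < pmin)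
    (hsstar : 0 ≤ sstar) :
    IntegrableOn (fun s => s * exp (-(pmin * max (s - sstar) 0))) (Ici 0) ∧
      ∫ s in Ici 0, s * exp (-(pmin * max (s - sstar) 0))
        = sstar ^ 2 / 2 + sstar / pmin + 1 / pmin ^ 2 := by
  obtain ⟨htail_int, htail⟩ := integrableOn_and_integral_Ioi_mul_exp_neg_mul_sub hpmin hsstar
  have hhead_eq : EqOn (fun s => s * exp (-(pmin * max (s - sstar) 0))) id (Ioc 0 sstar) :=
    fun s hs => by simp [max_eq_right (sub_nonpos.2 hs.2)]
  have htail_eq : EqOn (fun s => s * exp (-(pmin * max (s - sstar) 0)))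
      (fun s => s * exp (-(pmin * (s - sstar)))) (Ioi sstar) :=
    fun s hs => by simp [max_eq_left (sub_nonneg.2 (mem_Ioi.1 hs).le)]
  have hhead_int : IntegrableOn (fun s => s * exp (-(pmin * max (s - sstar) 0))) (Ioc 0 sstar) :=
    (continuous_id.integrableOn_Ioc).congr_fun hhead_eq.symm measurableSet_Ioc
  have htail_int' := htail_int.congr_fun htail_eq.symm measurableSet_Ioi
  have hint := hhead_int.union htail_int'
  rw [Ioc_union_Ioi_eq_Ioi hsstar] at hint
  refine ⟨Iff.mpr integrableOn_Ici_iff_integrableOn_Ioi hint, ?_⟩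
  rw [integral_Ici_eq_integral_Ioi, ← Ioc_union_Ioi_eq_Ioi hsstar,
    setIntegral_union (Ioc_disjoint_Ioi le_rfl) measurableSet_Ioi hhead_int htail_int',
    setIntegral_congr_fun measurableSet_Ioc hhead_eq,
    setIntegral_congr_fun measurableSet_Ioi htail_eq, htail,
    ← intervalIntegral.integral_of_le hsstar]
  simp only [id, integral_id]
  ring

end Weight

section MeanLifetime

variable {r r₁ r₂ : ℝ → ℝ} {pmin pmax sstar : ℝ}

theorem one_div_le_meanLifetime (hr : IsHazardRate pmin sstar r) (hpmin : 0 < pmin)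
    (hsstar : 0 ≤ sstar) (hpmax : 0 < pmax) (hup : ∀ s, r s ≤ pmax) :
    1 / pmax ≤ meanLifetime r := by
  have hexp : ∫ s in Ici (0 : ℝ), exp (-pmax * s) = 1 / pmax := by
    rw [integral_Ici_eq_integral_Ioi, integral_exp_mul_Ioi (neg_lt_zero.2 hpmax)]
    simp
  rw [← hexp]
  refine setIntegral_mono_on
    (Iff.mpr integrableOn_Ici_iff_integrableOn_Ioi (exp_neg_integrableOn_Ioi 0 hpmax))
    (integrableOn_exp_neg_cumHazard hr hpmin hsstar) measurableSet_Ici fun s hs => exp_le_exp.2 ?_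
  linarith [cumHazard_le_mul hr.continuous hup hs]

theorem abs_meanLifetime_sub_le {δ : ℝ} (hr₁ : IsHazardRate pmin sstar r₁)
    (hr₂ : IsHazardRate pmin sstar r₂) (hpmin : 0 < pmin) (hsstar : 0 ≤ sstar)
    (hδ : ∀ s, |r₁ s - r₂ s| ≤ δ) :
    |meanLifetime r₁ - meanLifetime r₂| ≤ δ * (sstar ^ 2 / 2 + sstar / pmin + 1 / pmin ^ 2) := by
  obtain ⟨hw_int, hw⟩ := integrableOn_and_integral_mul_exp_neg_mul_max_sub hpmin hsstar
  have hpt : ∀ s ∈ Ici (0 : ℝ), ‖exp (-cumHazard r₁ s) - exp (-cumHazard r₂ s)‖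
      ≤ δ * (s * exp (-(pmin * max (s - sstar) 0))) := fun s hs =>
    calc ‖exp (-cumHazard r₁ s) - exp (-cumHazard r₂ s)‖
        ≤ exp (-(pmin * max (s - sstar) 0)) * |cumHazard r₁ s - cumHazard r₂ s| :=
          abs_exp_neg_sub_exp_neg_le (mul_max_sub_le_cumHazard hr₁ hsstar hs)
            (mul_max_sub_le_cumHazard hr₂ hsstar hs)
      _ ≤ exp (-(pmin * max (s - sstar) 0)) * (δ * s) := by
          gcongr
          exact abs_cumHazard_sub_le hr₁.continuous hr₂.continuous hδ hs
      _ = δ * (s * exp (-(pmin * max (s - sstar) 0))) := by ring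
  rw [meanLifetime, meanLifetime, ← integral_sub (integrableOn_exp_neg_cumHazard hr₁ hpmin hsstar)
    (integrableOn_exp_neg_cumHazard hr₂ hpmin hsstar), ← hw, ← integral_const_mul, ← norm_eq_abs]
  exact norm_integral_le_of_norm_le (hw_int.const_mul δ)
    ((ae_restrict_mem measurableSet_Ici).mono hpt)

end MeanLifetime

section Stationary

variable {p : ℝ → ℝ → ℝ} {g r f : ℝ → ℝ} {N pmin sstar s : ℝ}

theorem setIntegral_Icc_eq_cumHazard (hgr : ∀ τ, 0 ≤ τ → g τ = r τ) (hs : 0 ≤ s) :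
    ∫ τ in Icc 0 s, g τ = cumHazard r s := by
  rw [integral_Icc_eq_integral_Ioc, cumHazard, intervalIntegral.integral_of_le hs]
  exact setIntegral_congr_fun measurableSet_Ioc fun τ hτ => hgr τ hτ.1.le

theorem setIntegral_exp_neg_setIntegral_Icc_eq_meanLifetime (hgr : ∀ τ, 0 ≤ τ → g τ = r τ) :
    ∫ s in Ici 0, exp (-∫ τ in Icc 0 s, g τ) = meanLifetime r :=
  setIntegral_congr_fun measurableSet_Ici fun _ hs => by rw [setIntegral_Icc_eq_cumHazard hgr hs]

theorem isStationaryDensityAge_of_mul_meanLifetime_eq_one (hr : IsHazardRate pmin sstar r)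
    (hpmin : 0 < pmin) (hsstar : 0 ≤ sstar) (hpr : ∀ s, 0 ≤ s → p N s = r s) (hN : 0 ≤ N)
    (hfix : N * meanLifetime r = 1) :
    IsStationaryDensityAge p (fun s => N * exp (-∫ τ in Icc 0 s, p N τ)) N := by
  have heq : EqOn (fun s => N * exp (-∫ τ in Icc 0 s, p N τ))
      (fun s => N * exp (-cumHazard r s)) (Ici 0) :=
    fun s hs => by simp only [setIntegral_Icc_eq_cumHazard hpr hs]
  refine ⟨?_, fun s hs => ?_, fun s _ => by positivity, ?_, by simp, ?_⟩
  · exact (continuous_const.mul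
      (continuous_cumHazard hr.continuous).neg.rexp).continuousOn.congr heq
  · have hs' : 0 ≤ s := (mem_Ioi.1 hs).le
    refine ((hasDerivAt_const_mul_exp_neg_cumHazard hr.continuous N s).congr_of_eventuallyEq
      ((heq.mono Ioi_subset_Ici_self).eventuallyEq_of_mem (Ioi_mem_nhds hs))).congr_deriv ?_
    beta_reduce
    rw [hpr s hs', setIntegral_Icc_eq_cumHazard hpr hs']
  · rw [integral_const_mul, setIntegral_exp_neg_setIntegral_Icc_eq_meanLifetime hpr, hfix]
  · have hflux : EqOn (fun s => p N s * (N * exp (-∫ τ in Icc 0 s, p N τ)))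
        (fun s => N * (r s * exp (-cumHazard r s))) (Ioi 0) := fun s hs => by
      beta_reduce
      rw [hpr s (mem_Ioi.1 hs).le, setIntegral_Icc_eq_cumHazard hpr (mem_Ioi.1 hs).le]
      ring
    rw [integral_Ici_eq_integral_Ioi, setIntegral_congr_fun measurableSet_Ioi hflux,
      integral_const_mul, integral_mul_exp_neg_cumHazard hr hpmin hsstar, mul_one]

theorem _root_.IsStationaryDensityAge.activity_nonneg (hf : IsStationaryDensityAge p f N) :
    0 ≤ N :=
  hf.2.2.2.2.1 ▸ hf.2.2.1 0 self_mem_Ici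

theorem _root_.IsStationaryDensityAge.eq_mul_exp_neg_cumHazard (hf : IsStationaryDensityAge p f N)
    (hr : Continuous r) (hpr : ∀ s, 0 ≤ s → p N s = r s) (hs : 0 ≤ s) :
    f s = N * exp (-cumHazard r s) := by
  obtain ⟨hcont, hderiv, -, -, hf0, -⟩ := hf
  rw [← hf0]
  exact eq_mul_exp_neg_cumHazard_of_hasDerivAt hr hcont
    (fun u hu => hpr u (mem_Ioi.1 hu).le ▸ hderiv u hu) hs

theorem _root_.IsStationaryDensityAge.mul_meanLifetime_eq_one (hf : IsStationaryDensityAge p f N)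
    (hr : Continuous r) (hpr : ∀ s, 0 ≤ s → p N s = r s) : N * meanLifetime r = 1 := by
  rw [meanLifetime, ← integral_const_mul, ← hf.2.2.2.1]
  exact (setIntegral_congr_fun measurableSet_Ici
    fun _ hs => hf.eq_mul_exp_neg_cumHazard hr hpr hs).symm

end Stationary

section Rate

variable {p : ℝ → ℝ → ℝ} {L pmin pmax sstar : ℝ}

/-- Clamping both arguments to `[0, ∞)` makes `rate p N` continuous on all of `ℝ` and
`N ↦ meanLifetime (rate p N)` Lipschitz on all of `ℝ`. -/
def rate (p : ℝ → ℝ → ℝ) (N s : ℝ) : ℝ := p (max N 0) (max s 0)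

theorem rate_of_nonneg {N s : ℝ} (hN : 0 ≤ N) (hs : 0 ≤ s) : rate p N s = p N s := by
  simp only [rate, max_eq_left hN, max_eq_left hs]

theorem rate_le (hp_up : ∀ N s, 0 ≤ N → 0 ≤ s → p N s ≤ pmax) (N s : ℝ) : rate p N s ≤ pmax :=
  hp_up _ _ (le_max_right _ _) (le_max_right _ _)

theorem continuous_rate (hp_lip : ∃ K : ℝ, ∀ N₁ s₁ N₂ s₂, 0 ≤ N₁ → 0 ≤ s₁ → 0 ≤ N₂ → 0 ≤ s₂ →
      |p N₁ s₁ - p N₂ s₂| ≤ K * (|N₁ - N₂| + |s₁ - s₂|)) (N : ℝ) :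
    Continuous (rate p N) := by
  obtain ⟨K, hK⟩ := hp_lip
  refine (LipschitzWith.of_dist_le' (K := max K 0) fun s₁ s₂ => ?_).continuous
  rw [Real.dist_eq, Real.dist_eq]
  calc |rate p N s₁ - rate p N s₂|
      ≤ K * (|max N 0 - max N 0| + |max s₁ 0 - max s₂ 0|) :=
        hK _ _ _ _ (le_max_right _ _) (le_max_right _ _) (le_max_right _ _) (le_max_right _ _)
    _ = K * |max s₁ 0 - max s₂ 0| := by rw [sub_self, abs_zero, zero_add]
    _ ≤ max K 0 * |s₁ - s₂| :=
        mul_le_mul (le_max_left _ _) (abs_max_sub_max_le_abs _ _ _) (abs_nonneg _)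
          (le_max_right _ _)

theorem isHazardRate_rate (hp_nonneg : ∀ N s, 0 ≤ N → 0 ≤ s → 0 ≤ p N s)
    (hp_lip : ∃ K : ℝ, ∀ N₁ s₁ N₂ s₂, 0 ≤ N₁ → 0 ≤ s₁ → 0 ≤ N₂ → 0 ≤ s₂ →
      |p N₁ s₁ - p N₂ s₂| ≤ K * (|N₁ - N₂| + |s₁ - s₂|))
    (hp_low : ∀ N s, 0 ≤ N → sstar ≤ s → pmin ≤ p N s) (N : ℝ) :
    IsHazardRate pmin sstar (rate p N) where
  continuous := continuous_rate hp_lip N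
  nonneg _ := hp_nonneg _ _ (le_max_right _ _) (le_max_right _ _)
  pmin_le _ hs := hp_low _ _ (le_max_right _ _) (hs.trans (le_max_left _ _))

theorem abs_rate_sub_le
    (hL : ∀ N₁ N₂ s, 0 ≤ N₁ → 0 ≤ N₂ → 0 ≤ s → |p N₁ s - p N₂ s| ≤ L * |N₁ - N₂|)
    (hL0 : 0 ≤ L) (N₁ N₂ s : ℝ) : |rate p N₁ s - rate p N₂ s| ≤ L * |N₁ - N₂| :=
  (hL _ _ _ (le_max_right _ _) (le_max_right _ _) (le_max_right _ _)).trans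
    (mul_le_mul_of_nonneg_left (abs_max_sub_max_le_abs _ _ _) hL0)

end Rate

end AgeStructured

open AgeStructured in
theorem age_structured_stationary_general
    (p : ℝ → ℝ → ℝ) (L pmin pmax sstar : ℝ)
    (hpmin : 0 < pmin) (hpmax : 0 < pmax) (hsstar : 0 < sstar)
    (hp_nonneg : ∀ N s, 0 ≤ N → 0 ≤ s → 0 ≤ p N s)
    (hp_lip : ∃ K : ℝ, ∀ N₁ s₁ N₂ s₂, 0 ≤ N₁ → 0 ≤ s₁ → 0 ≤ N₂ → 0 ≤ s₂ →
      |p N₁ s₁ - p N₂ s₂| ≤ K * (|N₁ - N₂| + |s₁ - s₂|))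
    (hp_low : ∀ N s, 0 ≤ N → sstar ≤ s → pmin ≤ p N s)
    (hp_up : ∀ N s, 0 ≤ N → 0 ≤ s → p N s ≤ pmax)
    (hL : ∀ N₁ N₂ s, 0 ≤ N₁ → 0 ≤ N₂ → 0 ≤ s → |p N₁ s - p N₂ s| ≤ L * |N₁ - N₂|)
    (hLsmall : L < 1 / (pmax ^ 2 * (sstar ^ 2 / 2 + sstar / pmin + 1 / pmin ^ 2))) :
    ∃ Nstar : ℝ, 0 < Nstar ∧
      Nstar * (∫ s in Set.Ici (0:ℝ),
        Real.exp (-(∫ τ in Set.Icc (0:ℝ) s, p Nstar τ))) = 1 ∧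
      (∀ N' : ℝ, 0 < N' →
        N' * (∫ s in Set.Ici (0:ℝ),
          Real.exp (-(∫ τ in Set.Icc (0:ℝ) s, p N' τ))) = 1 → N' = Nstar) ∧
      IsStationaryDensityAge p
        (fun s => Nstar * Real.exp (-(∫ τ in Set.Icc (0:ℝ) s, p Nstar τ))) Nstar ∧
      (∀ (f : ℝ → ℝ) (N' : ℝ), IsStationaryDensityAge p f N' →
        N' = Nstar ∧ ∀ s ∈ Set.Ici (0:ℝ),
          f s = Nstar * Real.exp (-(∫ τ in Set.Icc (0:ℝ) s, p Nstar τ))) := by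
  set C := sstar ^ 2 / 2 + sstar / pmin + 1 / pmin ^ 2
  have hL0 : 0 ≤ L := (abs_nonneg _).trans (by simpa using hL 1 0 0 zero_le_one le_rfl le_rfl)
  have hK : L * C < (1 / pmax) ^ 2 := by
    rw [lt_div_iff₀ (by positivity)] at hLsmall
    rw [div_pow, one_pow, lt_div_iff₀ (by positivity)]
    linarith
  have hrate := isHazardRate_rate hp_nonneg hp_lip hp_low
  have hpr : ∀ N, 0 ≤ N → ∀ s, 0 ≤ s → p N s = rate p N s :=
    fun N hN s hs => (rate_of_nonneg hN hs).symm
  have hI : ∀ N, 0 ≤ N →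
      ∫ s in Ici (0 : ℝ), exp (-∫ τ in Icc 0 s, p N τ) = meanLifetime (rate p N) :=
    fun N hN => setIntegral_exp_neg_setIntegral_Icc_eq_meanLifetime (hpr N hN)
  obtain ⟨Nstar, ⟨hpos, hfix⟩, huniq⟩ : ∃! N, 0 < N ∧ N * meanLifetime (rate p N) = 1 :=
    existsUnique_pos_mul_eq_one (by positivity)
      (fun N => one_div_le_meanLifetime (hrate N) hpmin hsstar.le hpmax (rate_le hp_up N)) hK
      fun N₁ N₂ => (abs_meanLifetime_sub_le (hrate N₁) (hrate N₂) hpmin hsstar.le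
        (abs_rate_sub_le hL hL0 N₁ N₂)).trans_eq (by ring)
  refine ⟨Nstar, hpos, by rwa [hI Nstar hpos.le],
    fun N' hN' hfix' => huniq N' ⟨hN', by rwa [hI N' hN'.le] at hfix'⟩,
    isStationaryDensityAge_of_mul_meanLifetime_eq_one (hrate Nstar) hpmin hsstar.le
      (hpr Nstar hpos.le) hpos.le hfix, fun f N' hf => ?_⟩
  have hN' : 0 ≤ N' := hf.activity_nonneg
  have hfix' := hf.mul_meanLifetime_eq_one (hrate N').continuous (hpr N' hN')
  obtain rfl := huniq N' ⟨hN'.lt_of_ne (by rintro rfl; simp at hfix'), hfix'⟩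
  refine ⟨rfl, fun s hs => ?_⟩
  rw [hf.eq_mul_exp_neg_cumHazard (hrate N').continuous (hpr N' hN') hs,
    setIntegral_Icc_eq_cumHazard (hpr N' hN') hs]

/-- **Existence and uniqueness of the stationary state of the age-structured model.**
Assume `p` is bounded, Lipschitz, with `p_min 1_{[s_*,∞)}(s) ≤ p(N,s) ≤ p_max`, and that
the Lipschitz constant `L` of `p` in its first variable satisfies
`L < p_max⁻² (s_*²/2 + s_*/p_min + 1/p_min²)⁻¹`.  Then there is a unique `N_* > 0` with
`N_* ∫_0^∞ exp(-∫_0^s p(N_*,τ) dτ) ds = 1`, and the probability density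
`s ↦ N_* exp(-∫_0^s p(N_*,τ) dτ)` is the unique stationary solution. -/
theorem age_structured_stationary
    (p : ℝ → ℝ → ℝ) (L pmin pmax sstar : ℝ)
    (hpmin : 0 < pmin) (hpmax : 0 < pmax) (hsstar : 0 < sstar)
    (hp_nonneg : ∀ N s, 0 ≤ N → 0 ≤ s → 0 ≤ p N s)
    (hp_lip : ∃ K : ℝ, ∀ N₁ s₁ N₂ s₂, 0 ≤ N₁ → 0 ≤ s₁ → 0 ≤ N₂ → 0 ≤ s₂ →
      |p N₁ s₁ - p N₂ s₂| ≤ K * (|N₁ - N₂| + |s₁ - s₂|))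
    (hp_low : ∀ N s, 0 ≤ N → sstar ≤ s → pmin ≤ p N s)
    (hp_up : ∀ N s, 0 ≤ N → 0 ≤ s → p N s ≤ pmax)
    (hL : ∀ N₁ N₂ s, 0 ≤ N₁ → 0 ≤ N₂ → 0 ≤ s → |p N₁ s - p N₂ s| ≤ L * |N₁ - N₂|)
    (hLleast : ∀ L' : ℝ,
      (∀ N₁ N₂ s, 0 ≤ N₁ → 0 ≤ N₂ → 0 ≤ s → |p N₁ s - p N₂ s| ≤ L' * |N₁ - N₂|) →
      L ≤ L')
    (hLsmall : L < 1 / (pmax ^ 2 * (sstar ^ 2 / 2 + sstar / pmin + 1 / pmin ^ 2))) :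
    ∃ Nstar : ℝ, 0 < Nstar ∧
      Nstar * (∫ s in Set.Ici (0:ℝ),
        Real.exp (-(∫ τ in Set.Icc (0:ℝ) s, p Nstar τ))) = 1 ∧
      (∀ N' : ℝ, 0 < N' →
        N' * (∫ s in Set.Ici (0:ℝ),
          Real.exp (-(∫ τ in Set.Icc (0:ℝ) s, p N' τ))) = 1 → N' = Nstar) ∧
      IsStationaryDensityAge p
        (fun s => Nstar * Real.exp (-(∫ τ in Set.Icc (0:ℝ) s, p Nstar τ))) Nstar ∧
      (∀ (f : ℝ → ℝ) (N' : ℝ), IsStationaryDensityAge p f N' →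
        N' = Nstar ∧ ∀ s ∈ Set.Ici (0:ℝ),
          f s = Nstar * Real.exp (-(∫ τ in Set.Icc (0:ℝ) s, p Nstar τ))) :=
  age_structured_stationary_general p L pmin pmax sstar hpmin hpmax hsstar hp_nonneg hp_lip hp_low
    hp_up hL hLsmall
end
end
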